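/- Assume x - x^{(k)}_in = E(x - x^{(k-1)}_in) + S(v₀^{(k)} - v₀_in^{(k)}) with ||E||_A < 1 and ||v₀^{(k)} - v₀_in^{(k)}||_{A₀} ≤ ε for all k = 1,…,n, and let x^{(n)}_ex satisfy x - x^{(n)}_ex = E^n (x - x^{(0)}). Then ||x^{(n)}_ex - x^{(n)}_in||_A ≤ ε ||S||_{A₀,A} / (1 - ||E||_A). -/

import Mathlib

open Matrix

/-- Euclidean norm of a vector. -/
noncomputable def eucl {n : ℕ} (v : Fin n → ℝ) : ℝ := Real.sqrt (v ⬝ᵥ v)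

/-- Energy norm induced by a matrix `A`: `‖v‖_A = (vᵀ A v)^{1/2}`. -/
noncomputable def enrg {n : ℕ} (A : Matrix (Fin n) (Fin n) ℝ) (v : Fin n → ℝ) : ℝ :=
  Real.sqrt (v ⬝ᵥ (A *ᵥ v))

/-- Operator norm of `S` from `(ℝ^n, ‖·‖_B)` to `(ℝ^m, ‖·‖_A)`. -/
noncomputable def opN {m n : ℕ} (A : Matrix (Fin m) (Fin m) ℝ)
    (B : Matrix (Fin n) (Fin n) ℝ) (S : Matrix (Fin m) (Fin n) ℝ) : ℝ :=
  sSup {c : ℝ | ∃ v : Fin n → ℝ, v ≠ 0 ∧ c = enrg A (S *ᵥ v) / enrg B v}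

/-- Spectral (Euclidean operator) norm of a matrix. -/
noncomputable def spN {m n : ℕ} (M : Matrix (Fin m) (Fin n) ℝ) : ℝ :=
  sSup {c : ℝ | ∃ v : Fin n → ℝ, v ≠ 0 ∧ c = eucl (M *ᵥ v) / eucl v}

lemma enrg_smul {n : ℕ} (A : Matrix (Fin n) (Fin n) ℝ) (c : ℝ) (v : Fin n → ℝ) :
    enrg A (c • v) = |c| * enrg A v := by
  unfold enrg
  rw [mulVec_smul, smul_dotProduct, dotProduct_smul, smul_eq_mul, smul_eq_mul, ← mul_assoc,
    Real.sqrt_mul (mul_self_nonneg c), Real.sqrt_mul_self_eq_abs]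

-- mulVec bounded wrt sup norms
lemma mulVec_norm_le {m n : ℕ} (S : Matrix (Fin m) (Fin n) ℝ) :
    ∃ N : ℝ, 0 ≤ N ∧ ∀ v : Fin n → ℝ, ‖S *ᵥ v‖ ≤ N * ‖v‖ := by
  let f := LinearMap.toContinuousLinearMap (S.mulVecLin)
  refine ⟨‖f‖, norm_nonneg _, fun v => ?_⟩
  have := f.le_opNorm v
  simpa [f, LinearMap.coe_toContinuousLinearMap'] using this

-- enrg upper bound by sup norm
lemma enrg_le_norm {n : ℕ} (A : Matrix (Fin n) (Fin n) ℝ) :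
    ∃ C : ℝ, 0 ≤ C ∧ ∀ v : Fin n → ℝ, enrg A v ≤ C * ‖v‖ := by
  obtain ⟨N, hN, hNle⟩ := mulVec_norm_le A
  refine ⟨Real.sqrt (n * N), Real.sqrt_nonneg _, fun v => ?_⟩
  have h1 : v ⬝ᵥ (A *ᵥ v) ≤ (n * N) * ‖v‖ ^ 2 := by
    calc v ⬝ᵥ (A *ᵥ v) ≤ ∑ i, |v i| * |(A *ᵥ v) i| := by
          refine Finset.sum_le_sum fun i _ => ?_
          exact le_trans (le_abs_self _) (by rw [abs_mul])
      _ ≤ ∑ _i : Fin n, ‖v‖ * (N * ‖v‖) := by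
          refine Finset.sum_le_sum fun i _ => ?_
          have h2 : |v i| ≤ ‖v‖ := by
            simpa using norm_le_pi_norm v i
          have h3 : |(A *ᵥ v) i| ≤ ‖A *ᵥ v‖ := by
            simpa using norm_le_pi_norm (A *ᵥ v) i
          exact mul_le_mul h2 (h3.trans (hNle v)) (abs_nonneg _) (norm_nonneg _)
      _ = (n * N) * ‖v‖ ^ 2 := by
          rw [Finset.sum_const, Finset.card_univ, Fintype.card_fin]; push_cast; ring
  calc enrg A v ≤ Real.sqrt ((n * N) * ‖v‖ ^ 2) := Real.sqrt_le_sqrt h1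
    _ = Real.sqrt (n * N) * ‖v‖ := by
        rw [Real.sqrt_mul (by positivity), Real.sqrt_sq (norm_nonneg _)]

-- enrg lower bound by sup norm for PosDef
lemma norm_le_enrg {n : ℕ} {B : Matrix (Fin n) (Fin n) ℝ} (hB : B.PosDef) :
    ∃ c : ℝ, 0 < c ∧ ∀ v : Fin n → ℝ, c * ‖v‖ ≤ enrg B v := by
  by_cases hall : ∀ v : Fin n → ℝ, v = 0
  · exact ⟨1, one_pos, fun v => by rw [hall v]; simp [enrg]⟩
  push_neg at hall
  obtain ⟨v₀, hv₀⟩ := hall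
  have hcont : Continuous fun v : Fin n → ℝ => enrg B v := by
    exact Real.continuous_sqrt.comp (continuous_id.dotProduct
      (continuous_const.matrix_mulVec continuous_id))
  have hsne : (Metric.sphere (0 : Fin n → ℝ) 1).Nonempty := by
    refine ⟨‖v₀‖⁻¹ • v₀, ?_⟩
    simp [norm_smul, abs_of_nonneg (inv_nonneg.2 (norm_nonneg v₀)),
      inv_mul_cancel₀ (norm_ne_zero_iff.2 hv₀)]
  obtain ⟨w, hw, hmin⟩ := (isCompact_sphere (0 : Fin n → ℝ) 1).exists_isMinOn hsne
    hcont.continuousOn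
  have hw1 : ‖w‖ = 1 := by simpa using hw
  have hwne : w ≠ 0 := by
    intro h; rw [h] at hw1; simp at hw1
  have hwpos : 0 < enrg B w := by
    have h := hB.dotProduct_mulVec_pos hwne
    exact Real.sqrt_pos.2 (by simpa using h)
  refine ⟨enrg B w, hwpos, fun v => ?_⟩
  by_cases hv : v = 0
  · simp [hv, enrg]
  have hvn : (0:ℝ) < ‖v‖ := norm_pos_iff.2 hv
  have hmem : ‖v‖⁻¹ • v ∈ Metric.sphere (0 : Fin n → ℝ) 1 := by
    simp [norm_smul, abs_of_nonneg (inv_nonneg.2 (norm_nonneg v)),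
      inv_mul_cancel₀ (ne_of_gt hvn)]
  have h2 : enrg B w ≤ ‖v‖⁻¹ * enrg B v := by
    have h3 : enrg B w ≤ enrg B (‖v‖⁻¹ • v) := hmin hmem
    rwa [enrg_smul, abs_of_nonneg (inv_nonneg.2 (norm_nonneg v))] at h3
  calc enrg B w * ‖v‖ ≤ (‖v‖⁻¹ * enrg B v) * ‖v‖ := by
        exact mul_le_mul_of_nonneg_right h2 (norm_nonneg v)
    _ = enrg B v := by field_simp

lemma enrg_pos {n : ℕ} {A : Matrix (Fin n) (Fin n) ℝ} (hA : A.PosDef) {v : Fin n → ℝ}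
    (hv : v ≠ 0) : 0 < enrg A v := by
  have h := hA.dotProduct_mulVec_pos hv
  exact Real.sqrt_pos.2 (by simpa using h)

lemma enrg_nonneg {n : ℕ} (A : Matrix (Fin n) (Fin n) ℝ) (v : Fin n → ℝ) :
    0 ≤ enrg A v := Real.sqrt_nonneg _

lemma enrg_sum_le {n : ℕ} {A : Matrix (Fin n) (Fin n) ℝ} (hA : A.PosDef)
    {ι : Type*} (s : Finset ι) (f : ι → Fin n → ℝ) :
    enrg A (∑ i ∈ s, f i) ≤ ∑ i ∈ s, enrg A (f i) := by
  have h := @norm_sum_le ι (Fin n → ℝ)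
    (A.toNormedAddCommGroup hA).toSeminormedAddCommGroup s f
  have key : ∀ v : Fin n → ℝ,
      @Norm.norm _ (A.toNormedAddCommGroup hA).toSeminormedAddCommGroup.toNorm v = enrg A v := by
    intro v; unfold enrg; rw [dotProduct_comm]; rfl
  simpa only [key] using h

lemma opN_bddAbove {m n : ℕ} {A : Matrix (Fin m) (Fin m) ℝ} (hA : A.PosDef)
    {B : Matrix (Fin n) (Fin n) ℝ} (hB : B.PosDef) (S : Matrix (Fin m) (Fin n) ℝ) :
    BddAbove {c : ℝ | ∃ v : Fin n → ℝ, v ≠ 0 ∧ c = enrg A (S *ᵥ v) / enrg B v} := by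
  obtain ⟨C, hC, hCle⟩ := enrg_le_norm A
  obtain ⟨N, hN, hNle⟩ := mulVec_norm_le S
  obtain ⟨c, hc, hcle⟩ := norm_le_enrg hB
  refine ⟨C * N / c, fun x hx => ?_⟩
  obtain ⟨v, hv, rfl⟩ := hx
  have hvn : (0:ℝ) < ‖v‖ := norm_pos_iff.2 hv
  have h1 : enrg A (S *ᵥ v) ≤ C * N * ‖v‖ := by
    calc enrg A (S *ᵥ v) ≤ C * ‖S *ᵥ v‖ := hCle _
      _ ≤ C * (N * ‖v‖) := mul_le_mul_of_nonneg_left (hNle v) hC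
      _ = C * N * ‖v‖ := by ring
  calc enrg A (S *ᵥ v) / enrg B v ≤ (C * N * ‖v‖) / (c * ‖v‖) := by
        refine div_le_div₀ (by positivity) h1 (by positivity) (hcle v)
    _ = C * N / c := by
        rw [mul_div_mul_right _ _ (ne_of_gt hvn)]

lemma enrg_mulVec_le {m n : ℕ} {A : Matrix (Fin m) (Fin m) ℝ} (hA : A.PosDef)
    {B : Matrix (Fin n) (Fin n) ℝ} (hB : B.PosDef) (S : Matrix (Fin m) (Fin n) ℝ)
    (v : Fin n → ℝ) : enrg A (S *ᵥ v) ≤ opN A B S * enrg B v := by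
  by_cases hv : v = 0
  · simp [hv, enrg, Matrix.mulVec_zero]
  have hB' := enrg_pos hB hv
  have hmem : enrg A (S *ᵥ v) / enrg B v ∈
      {c : ℝ | ∃ v : Fin n → ℝ, v ≠ 0 ∧ c = enrg A (S *ᵥ v) / enrg B v} := ⟨v, hv, rfl⟩
  have hle := le_csSup (opN_bddAbove hA hB S) hmem
  rw [div_le_iff₀ hB'] at hle
  exact hle

lemma opN_nonneg {m n : ℕ} {A : Matrix (Fin m) (Fin m) ℝ} (hA : A.PosDef)
    {B : Matrix (Fin n) (Fin n) ℝ} (hB : B.PosDef) (S : Matrix (Fin m) (Fin n) ℝ) :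
    0 ≤ opN A B S := by
  by_cases hall : ∀ v : Fin n → ℝ, v = 0
  · have : {c : ℝ | ∃ v : Fin n → ℝ, v ≠ 0 ∧ c = enrg A (S *ᵥ v) / enrg B v} = ∅ := by
      ext c; simp only [Set.mem_setOf_eq, Set.mem_empty_iff_false, iff_false]
      rintro ⟨v, hv, -⟩; exact hv (hall v)
    rw [opN, this, Real.sSup_empty]
  push_neg at hall
  obtain ⟨v, hv⟩ := hall
  have := le_csSup (opN_bddAbove hA hB S) (⟨v, hv, rfl⟩ :
    enrg A (S *ᵥ v) / enrg B v ∈ {c : ℝ | ∃ v : Fin n → ℝ, v ≠ 0 ∧ c = enrg A (S *ᵥ v) / enrg B v})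
  exact le_trans (div_nonneg (enrg_nonneg _ _) (enrg_nonneg _ _)) this

lemma enrg_pow_mulVec_le {n : ℕ} {A : Matrix (Fin n) (Fin n) ℝ} (hA : A.PosDef)
    (E : Matrix (Fin n) (Fin n) ℝ) (k : ℕ) (w : Fin n → ℝ) :
    enrg A ((E ^ k) *ᵥ w) ≤ (opN A A E) ^ k * enrg A w := by
  induction k with
  | zero => simp [Matrix.one_mulVec]
  | succ k ih =>
    rw [pow_succ', ← Matrix.mulVec_mulVec]
    calc enrg A (E *ᵥ ((E ^ k) *ᵥ w)) ≤ opN A A E * enrg A ((E ^ k) *ᵥ w) :=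
          enrg_mulVec_le hA hA E _
      _ ≤ opN A A E * ((opN A A E) ^ k * enrg A w) :=
          mul_le_mul_of_nonneg_left ih (opN_nonneg hA hA E)
      _ = (opN A A E) ^ (k + 1) * enrg A w := by ring

lemma geom_sum_le_one_div {r : ℝ} (hr : 0 ≤ r) (hr1 : r < 1) (n : ℕ) :
    ∑ j ∈ Finset.range n, r ^ j ≤ 1 / (1 - r) := by
  rw [le_div_iff₀ (by linarith)]
  nlinarith [geom_sum_mul r n, pow_nonneg hr n]

/-- absolute coarsest-level accuracy `ε` yields
`‖x_ex^{(n)} - x_in^{(n)}‖_A ≤ ε ‖S‖_{A₀,A} / (1 - ‖E‖_A)`. -/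
theorem stmt11 {d d0 : ℕ} (A : Matrix (Fin d) (Fin d) ℝ) (hA : A.PosDef)
    (A0 : Matrix (Fin d0) (Fin d0) ℝ) (hA0 : A0.PosDef)
    (E : Matrix (Fin d) (Fin d) ℝ) (S : Matrix (Fin d) (Fin d0) ℝ)
    (hE : opN A A E < 1)
    (xsol : Fin d → ℝ) (xin xex : ℕ → Fin d → ℝ) (v0 v0in : ℕ → Fin d0 → ℝ)
    (ε : ℝ) (hε : 0 < ε) (n : ℕ)
    (hin : ∀ k : ℕ,
      xsol - xin (k + 1) = E *ᵥ (xsol - xin k) + S *ᵥ (v0 (k + 1) - v0in (k + 1)))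
    (hacc : ∀ k : ℕ, 1 ≤ k → k ≤ n → enrg A0 (v0 k - v0in k) ≤ ε)
    (h0 : xex 0 = xin 0)
    (hex : xsol - xex n = (E ^ n) *ᵥ (xsol - xex 0)) :
    enrg A (xex n - xin n) ≤ ε * opN A A0 S / (1 - opN A A E) := by
  set r := opN A A E with hr
  have hr0 : 0 ≤ r := opN_nonneg hA hA E
  have h1r : 0 < 1 - r := by linarith
  have hS0 : 0 ≤ opN A A0 S := opN_nonneg hA hA0 S
  -- key recurrence
  have hkey : ∀ m : ℕ, xsol - xin m = (E ^ m) *ᵥ (xsol - xin 0) +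
      ∑ k ∈ Finset.range m, (E ^ (m - 1 - k)) *ᵥ (S *ᵥ (v0 (k + 1) - v0in (k + 1))) := by
    intro m
    induction m with
    | zero => simp [Matrix.one_mulVec]
    | succ m ih =>
      rw [hin m, ih, Matrix.mulVec_add, Finset.sum_range_succ]
      have hsum : E *ᵥ (∑ k ∈ Finset.range m,
          (E ^ (m - 1 - k)) *ᵥ (S *ᵥ (v0 (k + 1) - v0in (k + 1)))) =
          ∑ k ∈ Finset.range m, (E ^ (m - k)) *ᵥ (S *ᵥ (v0 (k + 1) - v0in (k + 1))) := by
        rw [show ∀ w : Fin d → ℝ, E *ᵥ w = E.mulVecLin w from fun _ => rfl, map_sum]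
        refine Finset.sum_congr rfl fun k hk => ?_
        rw [Finset.mem_range] at hk
        show E *ᵥ ((E ^ (m - 1 - k)) *ᵥ _) = _
        rw [Matrix.mulVec_mulVec, ← pow_succ', show m - 1 - k + 1 = m - k by omega]
      rw [hsum, Matrix.mulVec_mulVec, ← pow_succ']
      have hlast : (E ^ (m + 1 - 1 - m)) *ᵥ (S *ᵥ (v0 (m + 1) - v0in (m + 1))) =
          S *ᵥ (v0 (m + 1) - v0in (m + 1)) := by
        rw [show m + 1 - 1 - m = 0 by omega, pow_zero, Matrix.one_mulVec]
      rw [hlast]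
      have hcong : ∀ k ∈ Finset.range m, (E ^ (m + 1 - 1 - k)) *ᵥ
          (S *ᵥ (v0 (k + 1) - v0in (k + 1))) =
          (E ^ (m - k)) *ᵥ (S *ᵥ (v0 (k + 1) - v0in (k + 1))) := by
        intro k hk; rw [show m + 1 - 1 - k = m - k by omega]
      rw [Finset.sum_congr rfl hcong]
      abel
  -- difference formula
  have hdiff : xex n - xin n =
      ∑ k ∈ Finset.range n, (E ^ (n - 1 - k)) *ᵥ (S *ᵥ (v0 (k + 1) - v0in (k + 1))) := by
    have h1 : xex n - xin n = (xsol - xin n) - (xsol - xex n) := by abel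
    rw [h1, hkey n, hex, h0, add_sub_cancel_left]
  rw [hdiff]
  -- estimate
  calc enrg A (∑ k ∈ Finset.range n, (E ^ (n - 1 - k)) *ᵥ (S *ᵥ (v0 (k + 1) - v0in (k + 1))))
      ≤ ∑ k ∈ Finset.range n,
        enrg A ((E ^ (n - 1 - k)) *ᵥ (S *ᵥ (v0 (k + 1) - v0in (k + 1)))) :=
        enrg_sum_le hA _ _
    _ ≤ ∑ k ∈ Finset.range n, r ^ (n - 1 - k) * (opN A A0 S * ε) := by
        refine Finset.sum_le_sum fun k hk => ?_
        rw [Finset.mem_range] at hk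
        calc enrg A ((E ^ (n - 1 - k)) *ᵥ (S *ᵥ (v0 (k + 1) - v0in (k + 1))))
            ≤ r ^ (n - 1 - k) * enrg A (S *ᵥ (v0 (k + 1) - v0in (k + 1))) :=
              enrg_pow_mulVec_le hA E _ _
          _ ≤ r ^ (n - 1 - k) * (opN A A0 S * enrg A0 (v0 (k + 1) - v0in (k + 1))) :=
              mul_le_mul_of_nonneg_left (enrg_mulVec_le hA hA0 S _) (pow_nonneg hr0 _)
          _ ≤ r ^ (n - 1 - k) * (opN A A0 S * ε) := by
              refine mul_le_mul_of_nonneg_left ?_ (pow_nonneg hr0 _)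
              exact mul_le_mul_of_nonneg_left
                (hacc (k + 1) (by omega) (by omega)) hS0
    _ = (opN A A0 S * ε) * ∑ k ∈ Finset.range n, r ^ (n - 1 - k) := by
        rw [Finset.mul_sum]; exact Finset.sum_congr rfl fun k _ => by ring
    _ = (opN A A0 S * ε) * ∑ j ∈ Finset.range n, r ^ j := by
        rw [Finset.sum_range_reflect (fun j => r ^ j) n]
    _ ≤ (opN A A0 S * ε) * (1 / (1 - r)) := by
        exact mul_le_mul_of_nonneg_left (geom_sum_le_one_div hr0 hE n)
          (mul_nonneg hS0 hε.le)
    _ = ε * opN A A0 S / (1 - r) := by ring
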